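/- arXiv:1502.04328 — 4 statements merged into one kernel-verified Lean document; each statement's English description precedes it below -/
import Mathlib

section
/- Let X be a finite set of points in general position with |X| ≥ 2, let x ∈ X, and assume |X \ {x}| ≥ 2 and x ∉ convexHull(X \ {x}). Then x 'sees' at least two points of X \ {x} with respect to X \ {x}; that is, there exist at least two distinct points x' ∈ X \ {x} such that the segment from x to x' intersects the convex hull of X \ {x} only at x'. -/
open scoped Classical

noncomputable section

abbrev Pt : Type := ℝ × ℝ

/-- Signed value of `z` with respect to the line `a x + b y + c = 0`. -/
def sideVal (a b c : ℝ) (z : Pt) : ℝ := a * z.1 + b * z.2 + c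

/-- The segment `[u,v]` crosses the line: endpoints strictly on opposite sides. -/
def crossesLine (a b c : ℝ) (u v : Pt) : Prop := sideVal a b c u * sideVal a b c v < 0

/-- Planar determinant of two vectors. -/
def det2 (u v : Pt) : ℝ := u.1 * v.2 - u.2 * v.1

/-- `w` lies in the closed convex cone spanned by `u` and `v`. -/
def memCone (u v w : Pt) : Prop := ∃ s t : ℝ, 0 ≤ s ∧ 0 ≤ t ∧ w = s • u + t • v

/-- No three points of `X` are collinear. -/
def GenPos (X : Finset Pt) : Prop :=
  ∀ x ∈ X, ∀ y ∈ X, ∀ z ∈ X, x ≠ y → x ≠ z → y ≠ z → ¬ Collinear ℝ ({x, y, z} : Set Pt)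

/-- Edges of a straight-line path visiting the points of `l` in order. -/
def pathEdges (l : List Pt) : List (Pt × Pt) := l.zip l.tail

def segOf (e : Pt × Pt) : Set Pt := segment ℝ e.1 e.2

/-- Non-adjacent edges are disjoint; adjacent edges meet only at the shared vertex. -/
def NonSelfIntersecting (l : List Pt) : Prop :=
  (∀ i j, ∀ hi : i < (pathEdges l).length, ∀ hj : j < (pathEdges l).length, i + 1 < j →
    segOf ((pathEdges l).get ⟨i, hi⟩) ∩ segOf ((pathEdges l).get ⟨j, hj⟩) = ∅) ∧
  (∀ i, ∀ hi : i < (pathEdges l).length, ∀ hj : i + 1 < (pathEdges l).length,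
    segOf ((pathEdges l).get ⟨i, hi⟩) ∩ segOf ((pathEdges l).get ⟨i + 1, hj⟩)
      = {((pathEdges l).get ⟨i + 1, hj⟩).1})

/-- Number of edges of the path crossing the line `a x + b y + c = 0`. -/
def crossCount (a b c : ℝ) (l : List Pt) : ℕ :=
  ((pathEdges l).filter (fun e => decide (crossesLine a b c e.1 e.2))).length

/-- The `i`-th edge of the cycle on the points of `l` (indices mod `l.length`). -/
def cEdge (l : List Pt) (i : ℕ) (hi : i < l.length) : Set Pt :=
  segment ℝ (l.get ⟨i, hi⟩)
    (l.get ⟨(i + 1) % l.length, Nat.mod_lt _ (Nat.lt_of_le_of_lt (Nat.zero_le i) hi)⟩)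

/-- Simple polygon condition for the cycle through `l`. -/
def CycleNSI (l : List Pt) : Prop :=
  ∀ i j, ∀ hi : i < l.length, ∀ hj : j < l.length, i ≠ j →
    ((i + 1) % l.length = j → cEdge l i hi ∩ cEdge l j hj = {l.get ⟨j, hj⟩}) ∧
    ((j + 1) % l.length = i → cEdge l i hi ∩ cEdge l j hj = {l.get ⟨i, hi⟩}) ∧
    ((i + 1) % l.length ≠ j → (j + 1) % l.length ≠ i → cEdge l i hi ∩ cEdge l j hj = ∅)

/-- Number of edges of the cycle on `l` crossing the line. -/
def cycleCrossCount (a b c : ℝ) (l : List Pt) : ℕ :=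
  (Finset.univ.filter (fun i : Fin l.length =>
    crossesLine a b c (l.get i)
      (l.get ⟨(i.1 + 1) % l.length,
        Nat.mod_lt _ (Nat.lt_of_le_of_lt (Nat.zero_le i.1) i.2)⟩))).card

lemma collinear_of_det2 {x y z : Pt} (hy : y ≠ x) (hd : det2 (y - x) (z - x) = 0) :
    Collinear ℝ ({x, y, z} : Set Pt) := by
  set u : Pt := y - x with hu
  set v : Pt := z - x with hv
  have hune : u ≠ 0 := sub_ne_zero.mpr hy
  have hdet : u.1 * v.2 - u.2 * v.1 = 0 := hd
  obtain ⟨c, hc⟩ : ∃ c : ℝ, v = c • u := by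
    by_cases h1 : u.1 = 0
    · have h2 : u.2 ≠ 0 := by
        intro h2; exact hune (Prod.ext h1 h2)
      refine ⟨v.2 / u.2, ?_⟩
      have hv1 : v.1 = 0 := by
        have h := hdet; rw [h1] at h
        have h' : u.2 * v.1 = 0 := by linarith
        rcases mul_eq_zero.mp h' with h'' | h''
        · exact absurd h'' h2
        · exact h''
      apply Prod.ext <;> simp [Prod.smul_fst, Prod.smul_snd, smul_eq_mul, h1, hv1]
      field_simp
    · refine ⟨v.1 / u.1, ?_⟩
      apply Prod.ext <;> simp [Prod.smul_fst, Prod.smul_snd, smul_eq_mul]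
      · field_simp
      · field_simp
        nlinarith [hdet]
  rw [collinear_iff_of_mem (Set.mem_insert x {y, z})]
  refine ⟨u, ?_⟩
  intro q hq
  rcases hq with rfl | rfl | rfl
  · exact ⟨0, by simp⟩
  · exact ⟨1, by simp [hu]⟩
  · exact ⟨c, by rw [← hc, hv]; simp only [vadd_eq_add]; abel⟩

lemma vis_lemma (Y : Finset Pt) (x y : Pt) (hy : y ∈ Y) (e : ℝ)
    (hpos : ∀ z ∈ Y, z ≠ y → 0 < e * det2 (y - x) (z - x)) :
    segment ℝ x y ∩ convexHull ℝ (↑Y : Set Pt) = {y} := by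
  rw [Set.eq_singleton_iff_unique_mem]
  constructor
  · exact ⟨right_mem_segment _ _ _, subset_convexHull ℝ _ (by exact_mod_cast hy)⟩
  · rintro w ⟨hwseg, hwhull⟩
    rw [Finset.convexHull_eq] at hwhull
    obtain ⟨lam, hnn, hsum, hcm⟩ := hwhull
    have hw : ∑ z ∈ Y, lam z • z = w := by
      rw [← hcm, Finset.centerMass_eq_of_sum_1 _ _ hsum]; rfl
    -- w - x = ∑ lam z • (z - x)
    have hwx : (w - x : Pt) = ∑ z ∈ Y, lam z • (z - x) := by
      have : ∑ z ∈ Y, lam z • (z - x) = (∑ z ∈ Y, lam z • z) - (∑ z ∈ Y, lam z) • x := by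
        rw [Finset.sum_smul]
        rw [← Finset.sum_sub_distrib]
        exact Finset.sum_congr rfl (fun z _ => by rw [smul_sub])
      rw [this, hw, hsum, one_smul]
    -- from segment: det2 (y-x) (w-x) = 0
    obtain ⟨a, b, ha, hb, hab, habw⟩ := hwseg
    have hwx2 : (w - x : Pt) = b • (y - x) := by
      rw [← habw]
      have : a = 1 - b := by linarith
      rw [this]
      apply Prod.ext <;> simp [Prod.smul_fst, Prod.smul_snd, smul_eq_mul] <;> ring
    have hdet0 : det2 (y - x) (w - x) = 0 := by
      rw [hwx2]; simp only [det2, Prod.smul_fst, Prod.smul_snd, smul_eq_mul]; ring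
    have hsum0 : ∑ z ∈ Y, lam z * (e * det2 (y - x) (z - x)) = 0 := by
      have hlin : det2 (y - x) (∑ z ∈ Y, lam z • (z - x))
          = ∑ z ∈ Y, lam z * det2 (y - x) (z - x) := by
        unfold det2
        rw [Prod.fst_sum, Prod.snd_sum, Finset.mul_sum, Finset.mul_sum,
          ← Finset.sum_sub_distrib]
        exact Finset.sum_congr rfl (fun z _ => by
          simp only [Prod.smul_fst, Prod.smul_snd, smul_eq_mul]; ring)
      have : ∑ z ∈ Y, lam z * det2 (y - x) (z - x) = 0 := by
        rw [← hlin, ← hwx, hdet0]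
      calc ∑ z ∈ Y, lam z * (e * det2 (y - x) (z - x))
          = e * ∑ z ∈ Y, lam z * det2 (y - x) (z - x) := by
            rw [Finset.mul_sum]; exact Finset.sum_congr rfl (fun z _ => by ring)
        _ = 0 := by rw [this, mul_zero]
    have hterm : ∀ z ∈ Y, z ≠ y → lam z = 0 := by
      intro z hz hzy
      have hall := (Finset.sum_eq_zero_iff_of_nonneg (fun z hz => ?_)).mp hsum0 z hz
      · rcases mul_eq_zero.mp hall with h | h
        · exact h
        · exact absurd h (ne_of_gt (hpos z hz hzy))
      · by_cases hzy' : z = y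
        · subst hzy'
          have hz0 : det2 (z - x) (z - x) = 0 := by unfold det2; ring
          rw [hz0, mul_zero, mul_zero]
        · exact mul_nonneg (hnn z hz) (le_of_lt (hpos z hz hzy'))
    have hlamy : lam y = 1 := by
      rw [← hsum]
      rw [Finset.sum_eq_single y (fun z hz hzy => hterm z hz hzy) (fun h => absurd hy h)]
    rw [← hw]
    rw [Finset.sum_eq_single y (fun z hz hzy => by rw [hterm z hz hzy, zero_smul])
      (fun h => absurd hy h), hlamy, one_smul]

/-- A hull vertex sees at least two points of the remaining set. -/
theorem stmt1 (X : Finset Pt) (hX : 2 ≤ X.card) (hgp : GenPos X) (x : Pt) (hx : x ∈ X)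
    (hcard : 2 ≤ (X.erase x).card)
    (hout : x ∉ convexHull ℝ ((X.erase x : Finset Pt) : Set Pt)) :
    ∃ x₁ x₂ : Pt, x₁ ∈ X.erase x ∧ x₂ ∈ X.erase x ∧ x₁ ≠ x₂ ∧
      segment ℝ x x₁ ∩ convexHull ℝ ((X.erase x : Finset Pt) : Set Pt) = {x₁} ∧
      segment ℝ x x₂ ∩ convexHull ℝ ((X.erase x : Finset Pt) : Set Pt) = {x₂} := by
  set Y := X.erase x with hYdef
  have hYne : Y.Nonempty := Finset.card_pos.mp (by omega)
  obtain ⟨f, c, hfx, hfY⟩ := geometric_hahn_banach_point_closed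
    (convex_convexHull ℝ _) (Y.finite_toSet.isClosed_convexHull ℝ) hout
  set p := f ((1 : ℝ), (0 : ℝ)) with hp
  set q := f ((0 : ℝ), (1 : ℝ)) with hq
  have hf : ∀ z : Pt, f z = z.1 * p + z.2 * q := by
    intro z
    have hz : (z : Pt) = z.1 • ((1:ℝ), (0:ℝ)) + z.2 • ((0:ℝ), (1:ℝ)) := by
      apply Prod.ext <;> simp
    calc f z = f (z.1 • ((1:ℝ), (0:ℝ)) + z.2 • ((0:ℝ), (1:ℝ))) := by rw [← hz]
      _ = z.1 * p + z.2 * q := by rw [map_add, map_smul, map_smul]; simp [smul_eq_mul, hp, hq]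
  have hg : ∀ z ∈ Y, 0 < f z - f x := by
    intro z hz
    have : c < f z := hfY z (subset_convexHull ℝ _ (by exact_mod_cast hz))
    linarith
  have hpq : 0 < p ^ 2 + q ^ 2 := by
    have hne : p ≠ 0 ∨ q ≠ 0 := by
      by_contra h
      push_neg at h
      obtain ⟨y₀, hy₀⟩ := hYne
      have h1 := hf x
      have h2 := hf y₀
      have h3 := hg y₀ hy₀
      rw [h.1, h.2] at h1 h2
      simp at h1 h2
      linarith
    rcases hne with h | h
    · have := lt_of_le_of_ne (sq_nonneg p) (Ne.symm (pow_ne_zero 2 h))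
      nlinarith [sq_nonneg q]
    · have := lt_of_le_of_ne (sq_nonneg q) (Ne.symm (pow_ne_zero 2 h))
      nlinarith [sq_nonneg p]
  set D : Pt → ℝ := fun z => det2 ((p, q) : Pt) (z - x) with hD
  set hfun : Pt → ℝ := fun z => D z / (f z - f x) with hfn
  have hkey : ∀ y z : Pt, (p ^ 2 + q ^ 2) * det2 (y - x) (z - x)
      = (f y - f x) * D z - (f z - f x) * D y := by
    intro y z
    rw [hf y, hf x, hf z]
    simp only [hD, det2]
    simp only [Prod.fst_sub, Prod.snd_sub]
    ring
  -- distinctness of dets (general position)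
  have hdetne : ∀ y ∈ Y, ∀ z ∈ Y, y ≠ z → det2 (y - x) (z - x) ≠ 0 := by
    intro y hy z hz hyz hd0
    have hyX : y ∈ X := Finset.mem_of_mem_erase hy
    have hzX : z ∈ X := Finset.mem_of_mem_erase hz
    have hyx : y ≠ x := Finset.ne_of_mem_erase hy
    have hzx : z ≠ x := Finset.ne_of_mem_erase hz
    exact hgp x hx y hyX z hzX (Ne.symm hyx) (Ne.symm hzx) hyz
      (collinear_of_det2 hyx hd0)
  obtain ⟨y₁, hy₁, hmax⟩ := Y.exists_max_image hfun hYne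
  obtain ⟨y₂, hy₂, hmin⟩ := Y.exists_min_image hfun hYne
  have hmaxdet : ∀ z ∈ Y, z ≠ y₁ → det2 (y₁ - x) (z - x) < 0 := by
    intro z hz hzy
    have hle : hfun z ≤ hfun y₁ := hmax z hz
    rw [hfn] at hle
    simp only at hle
    rw [div_le_div_iff₀ (hg z hz) (hg y₁ hy₁)] at hle
    have h1 : (p ^ 2 + q ^ 2) * det2 (y₁ - x) (z - x) ≤ 0 := by
      rw [hkey]; linarith
    have h2 : det2 (y₁ - x) (z - x) ≠ 0 := hdetne y₁ hy₁ z hz (Ne.symm hzy)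
    have h3 : det2 (y₁ - x) (z - x) ≤ 0 := by
      by_contra hpos
      push_neg at hpos
      nlinarith
    exact lt_of_le_of_ne h3 h2
  have hmindet : ∀ z ∈ Y, z ≠ y₂ → 0 < det2 (y₂ - x) (z - x) := by
    intro z hz hzy
    have hle : hfun y₂ ≤ hfun z := hmin z hz
    rw [hfn] at hle
    simp only at hle
    rw [div_le_div_iff₀ (hg y₂ hy₂) (hg z hz)] at hle
    have h1 : 0 ≤ (p ^ 2 + q ^ 2) * det2 (y₂ - x) (z - x) := by
      rw [hkey]; linarith
    have h2 : det2 (y₂ - x) (z - x) ≠ 0 := hdetne y₂ hy₂ z hz (Ne.symm hzy)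
    have h3 : 0 ≤ det2 (y₂ - x) (z - x) := by
      by_contra hneg
      push_neg at hneg
      nlinarith
    exact lt_of_le_of_ne h3 (Ne.symm h2)
  have hne12 : y₁ ≠ y₂ := by
    obtain ⟨z, hz, hzy⟩ := Finset.exists_mem_ne (show 1 < Y.card by omega) y₁
    intro heq
    have h1 := hmaxdet z hz hzy
    have h2 := hmindet z hz (heq ▸ hzy)
    rw [← heq] at h2
    linarith
  refine ⟨y₁, y₂, hy₁, hy₂, hne12, ?_, ?_⟩
  · exact vis_lemma Y x y₁ hy₁ (-1) (fun z hz hzy => by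
      have := hmaxdet z hz hzy; linarith)
  · exact vis_lemma Y x y₂ hy₂ 1 (fun z hz hzy => by
      have := hmindet z hz hzy; linarith)
end
end

section
/- Let p be a point and let x₁, y₁, x₂, y₂ be points distinct from p. Suppose the clockwise angle about p from x₁ to y₁ and from x₂ to y₂ are both strictly less than π, and suppose the angular intervals about p from x₁ to y₁ and from x₂ to y₂ are disjoint. Then the closed segments [x₁, y₁] and [x₂, y₂] are disjoint. -/
open scoped Classical

noncomputable section

lemma seg_cone (p x y z : Pt) (hy : y ≠ p)
    (hang : det2 (x - p) (y - p) < 0) (hz : z ∈ segment ℝ x y) :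
    z ≠ p ∧ memCone (x - p) (y - p) (z - p) := by
  obtain ⟨a, b, ha, hb, hab, hz⟩ := hz
  constructor
  · intro hzp
    rw [hzp] at hz
    have hz1 : a * x.1 + b * y.1 = p.1 := by
      have := congrArg Prod.fst hz; simpa using this
    have hz2 : a * x.2 + b * y.2 = p.2 := by
      have := congrArg Prod.snd hz; simpa using this
    have h1 : a * (x.1 - p.1) + b * (y.1 - p.1) = 0 := by
      linear_combination hz1 - p.1 * hab
    have h2 : a * (x.2 - p.2) + b * (y.2 - p.2) = 0 := by
      linear_combination hz2 - p.2 * hab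
    have hd : det2 (x - p) (y - p) = (x.1 - p.1) * (y.2 - p.2) - (x.2 - p.2) * (y.1 - p.1) := rfl
    have key : a * det2 (x - p) (y - p) = 0 := by
      rw [hd]; linear_combination (y.2 - p.2) * h1 - (y.1 - p.1) * h2
    have ha0 : a = 0 := by
      rcases mul_eq_zero.mp key with h | h
      · exact h
      · exact absurd h (ne_of_lt hang)
    have hb1 : b = 1 := by linarith
    apply hy
    rw [ha0, hb1] at hz1 hz2
    have e1 : y.1 = p.1 := by linarith
    have e2 : y.2 = p.2 := by linarith
    exact Prod.ext e1 e2
  · exact ⟨a, b, ha, hb, by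
      rw [← hz]
      linear_combination (norm := module) hab • p⟩

/-- Segments subtending disjoint angular intervals of angle `< π` at `p` are disjoint. -/
theorem stmt3 (p x₁ y₁ x₂ y₂ : Pt)
    (hx₁ : x₁ ≠ p) (hy₁ : y₁ ≠ p) (hx₂ : x₂ ≠ p) (hy₂ : y₂ ≠ p)
    (hang₁ : det2 (x₁ - p) (y₁ - p) < 0) (hang₂ : det2 (x₂ - p) (y₂ - p) < 0)
    (hdisj : ∀ w : Pt, w ≠ 0 → memCone (x₁ - p) (y₁ - p) w → ¬ memCone (x₂ - p) (y₂ - p) w) :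
    segment ℝ x₁ y₁ ∩ segment ℝ x₂ y₂ = ∅ := by
  ext z
  simp only [Set.mem_inter_iff, Set.mem_empty_iff_false, iff_false, not_and]
  intro h1 h2
  obtain ⟨hzp, hc1⟩ := seg_cone p x₁ y₁ z hy₁ hang₁ h1
  obtain ⟨_, hc2⟩ := seg_cone p x₂ y₂ z hy₂ hang₂ h2
  exact hdisj (z - p) (sub_ne_zero.mpr hzp) hc1 hc2
end
end

section
/- Let x, y, x', y' be points and p a center point, none of x,y,x',y' equal to p. Suppose the segments [x, y] and [x', y'] intersect at a point z ≠ p, and suppose the clockwise angles about p from x to y and from x' to y' are both strictly less than π. Then the angular interval from x to y and the angular interval from x' to y' about p have nonempty intersection. -/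
open scoped Classical

noncomputable section

/-- Crossing segments subtend overlapping angular intervals about `p`. -/
theorem stmt8 (p x y x' y' z : Pt)
    (hx : x ≠ p) (hy : y ≠ p) (hx' : x' ≠ p) (hy' : y' ≠ p)
    (hz1 : z ∈ segment ℝ x y) (hz2 : z ∈ segment ℝ x' y') (hzp : z ≠ p)
    (ha1 : det2 (x - p) (y - p) < 0) (ha2 : det2 (x' - p) (y' - p) < 0) :
    ∃ w : Pt, w ≠ 0 ∧ memCone (x - p) (y - p) w ∧ memCone (x' - p) (y' - p) w := by
  refine ⟨z - p, sub_ne_zero.mpr hzp, ?_, ?_⟩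
  · obtain ⟨a, b, ha, hb, hab, habz⟩ := hz1
    obtain rfl : b = 1 - a := by linarith
    exact ⟨a, 1 - a, ha, hb, by rw [← habz]; module⟩
  · obtain ⟨a, b, ha, hb, hab, habz⟩ := hz2
    obtain rfl : b = 1 - a := by linarith
    exact ⟨a, 1 - a, ha, hb, by rw [← habz]; module⟩
end
end

section
/- Let p be a point and X a finite set of points with p ∉ convexHull(X), all points of X at distinct directions from p (no two points of X ∪ {p} collinear with p). Suppose the angular extent of X about p is less than π, i.e., X is contained in an open half-plane whose boundary passes through p. Let a be the first and b the last point of X in clockwise radial order about p. Then X lies in the closed convex cone with apex p spanned by the rays p→a and p→b, and a and b are vertices of the convex hull of X. -/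
open scoped Classical

noncomputable section

/-! Every point `x ≠ a` of `X` lies strictly clockwise of the ray `p → a`, because no two points
of `X` are collinear with `p`; symmetrically, every `x ≠ b` lies strictly counterclockwise of
`p → b`. Cramer's rule in the basis `a - p`, `b - p` then gives `x - p` nonnegative coefficients,
and the line through `p` and `a` (resp. `b`) leaves all other points of `X` strictly on one side,
so `a` (resp. `b`) is not in the convex hull of the others. -/

lemma det2_swap (u v : Pt) : det2 u v = -det2 v u := by
  simp only [det2]; ring

lemma isLinearMap_det2_left (v : Pt) : IsLinearMap ℝ (fun u => det2 u v) where
  map_add u w := by simp only [det2, Prod.fst_add, Prod.snd_add]; ring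
  map_smul c u := by simp only [det2, Prod.smul_fst, Prod.smul_snd, smul_eq_mul]; ring

lemma isLinearMap_det2_right (u : Pt) : IsLinearMap ℝ (det2 u) where
  map_add v w := by simp only [det2, Prod.fst_add, Prod.snd_add]; ring
  map_smul c v := by simp only [det2, Prod.smul_fst, Prod.smul_snd, smul_eq_mul]; ring

lemma exists_eq_smul_of_det2_eq_zero {u v : Pt} (hu : u ≠ 0) (h : det2 u v = 0) :
    ∃ c : ℝ, v = c • u := by
  simp only [det2] at h
  by_cases h1 : u.1 = 0
  · have h2 : u.2 ≠ 0 := fun h2 => hu (Prod.ext h1 h2)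
    have hv1 : v.1 = 0 := by
      rw [h1, zero_mul, zero_sub, neg_eq_zero] at h
      exact (mul_eq_zero.1 h).resolve_left h2
    refine ⟨v.2 / u.2, Prod.ext ?_ ?_⟩ <;> simp only [Prod.smul_fst, Prod.smul_snd, smul_eq_mul]
    · rw [h1, hv1, mul_zero]
    · field_simp
  · refine ⟨v.1 / u.1, Prod.ext ?_ ?_⟩ <;> simp only [Prod.smul_fst, Prod.smul_snd, smul_eq_mul]
    · field_simp
    · field_simp; linarith

lemma collinear_of_det2_sub_eq_zero {p a x : Pt} (h : det2 (a - p) (x - p) = 0) :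
    Collinear ℝ ({p, a, x} : Set Pt) := by
  by_cases hap : a - p = 0
  · rw [sub_eq_zero.1 hap, Set.insert_eq_of_mem (Set.mem_insert p _)]
    exact collinear_pair ℝ p x
  obtain ⟨c, hc⟩ := exists_eq_smul_of_det2_eq_zero hap h
  rw [collinear_iff_of_mem (Set.mem_insert p _)]
  refine ⟨a - p, ?_⟩
  rintro q (rfl | rfl | rfl)
  · exact ⟨0, by simp⟩
  · exact ⟨1, by simp⟩
  · exact ⟨c, by rw [← hc]; simp⟩

lemma det2_sub_ne_zero_of_not_collinear {p a x : Pt} (h : ¬Collinear ℝ ({p, a, x} : Set Pt)) :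
    det2 (a - p) (x - p) ≠ 0 :=
  fun h0 => h (collinear_of_det2_sub_eq_zero h0)

lemma eq_det2_div_smul_add {A B w : Pt} (hAB : det2 A B ≠ 0) :
    w = (det2 w B / det2 A B) • A + (det2 A w / det2 A B) • B := by
  refine Prod.ext ?_ ?_ <;>
    simp only [Prod.fst_add, Prod.snd_add, Prod.smul_fst, Prod.smul_snd, smul_eq_mul] <;>
    field_simp <;> simp only [det2] <;> ring

lemma memCone_of_det2_nonpos {A B w : Pt} (hAB : det2 A B < 0) (hA : det2 A w ≤ 0)
    (hB : det2 w B ≤ 0) : memCone A B w :=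
  ⟨_, _, div_nonneg_of_nonpos hB hAB.le, div_nonneg_of_nonpos hA hAB.le,
    eq_det2_div_smul_add hAB.ne⟩

lemma notMem_convexHull_of_forall_lt {E : Type*} [AddCommGroup E] [Module ℝ E] {f : E → ℝ}
    (hf : IsLinearMap ℝ f) {S : Set E} {z : E} (hS : ∀ y ∈ S, f y < f z) :
    z ∉ convexHull ℝ S :=
  fun hz => lt_irrefl (f z) ((convex_halfSpace_lt hf (f z)).convexHull_subset_iff.2 hS hz)

theorem stmt15_general (p : Pt) (X : Finset Pt)
    (hdir : ∀ x ∈ X, ∀ y ∈ X, x ≠ y → ¬ Collinear ℝ ({p, x, y} : Set Pt))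
    (a bpt : Pt) (ha : a ∈ X) (hb : bpt ∈ X)
    (hfirst : ∀ x ∈ X, det2 (a - p) (x - p) ≤ 0)
    (hlast : ∀ x ∈ X, det2 (x - p) (bpt - p) ≤ 0) :
    (∀ x ∈ X, memCone (a - p) (bpt - p) (x - p)) ∧
    a ∉ convexHull ℝ ((X.erase a : Finset Pt) : Set Pt) ∧
    bpt ∉ convexHull ℝ ((X.erase bpt : Finset Pt) : Set Pt) := by
  have ha_lt : ∀ x ∈ X, x ≠ a → det2 (a - p) (x - p) < 0 := fun x hx hxa =>
    (hfirst x hx).lt_of_ne (det2_sub_ne_zero_of_not_collinear (hdir a ha x hx hxa.symm))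
  have hb_lt : ∀ x ∈ X, x ≠ bpt → det2 (x - p) (bpt - p) < 0 := fun x hx hxb =>
    (hlast x hx).lt_of_ne (by
      rw [det2_swap, neg_ne_zero]
      exact det2_sub_ne_zero_of_not_collinear (hdir bpt hb x hx hxb.symm))
  refine ⟨fun x hx => ?_, notMem_convexHull_of_forall_lt (isLinearMap_det2_right (a - p)) ?_,
    notMem_convexHull_of_forall_lt (isLinearMap_det2_left (bpt - p)) ?_⟩
  · by_cases hab : a = bpt
    · subst hab
      obtain rfl : x = a := by
        by_contra hxa
        linarith [ha_lt x hx hxa, hb_lt x hx hxa, det2_swap (a - p) (x - p)]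
      exact ⟨1, 0, zero_le_one, le_rfl, by simp⟩
    · exact memCone_of_det2_nonpos (ha_lt bpt hb (Ne.symm hab)) (hfirst x hx) (hlast x hx)
  · intro y hy
    obtain ⟨hya, hy⟩ := Finset.mem_erase.1 hy
    have := ha_lt y hy hya
    simp only [det2, Prod.fst_sub, Prod.snd_sub] at this ⊢
    linarith
  · intro y hy
    obtain ⟨hyb, hy⟩ := Finset.mem_erase.1 hy
    have := hb_lt y hy hyb
    simp only [det2, Prod.fst_sub, Prod.snd_sub] at this ⊢
    linarith

/-- If `X` lies in an open half-plane through `p` and `a`, `b` are the radially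
extreme points, then `X` lies in the cone spanned by `p→a` and `p→b`, and `a`, `b`
are vertices of the convex hull of `X`. -/
theorem stmt15 (p : Pt) (X : Finset Pt)
    (hpX : p ∉ convexHull ℝ ((X : Finset Pt) : Set Pt))
    (hdir : ∀ x ∈ X, ∀ y ∈ X, x ≠ y → ¬ Collinear ℝ ({p, x, y} : Set Pt))
    (u : Pt) (hu : u ≠ 0) (hhalf : ∀ x ∈ X, 0 < det2 u (x - p))
    (a bpt : Pt) (ha : a ∈ X) (hb : bpt ∈ X)
    (hfirst : ∀ x ∈ X, det2 (a - p) (x - p) ≤ 0)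
    (hlast : ∀ x ∈ X, det2 (x - p) (bpt - p) ≤ 0) :
    (∀ x ∈ X, memCone (a - p) (bpt - p) (x - p)) ∧
    a ∉ convexHull ℝ ((X.erase a : Finset Pt) : Set Pt) ∧
    bpt ∉ convexHull ℝ ((X.erase bpt : Finset Pt) : Set Pt) :=
  stmt15_general p X hdir a bpt ha hb hfirst hlast
end
end
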